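/- Let H be an N×N Hermitian complex matrix with an orthonormal basis of eigenvectors ψ_1,…,ψ_N of ℂ^N satisfying Hψ_j = λ_j ψ_j (λ_j ∈ ℝ). Let x ∈ ℂ^N and a ∈ ℝ. For i ∈ {1,…,N}, define g(i) = (Hx)_i · e_i and x'(i) = x − a·g(i). Then (1/N) · Σ_{i=1}^N ‖x'(i)‖² = Σ_{j=1}^N (1 − 2aλ_j/N) · |⟨ψ_j, x⟩|² + (a²/N) · ‖Hx‖². -/

import Mathlib

/-!
Expanding the square, `‖x - a (Hx)_i e_i‖² = ‖x‖² - 2a Re (conj (x_i) (Hx)_i) + a² |(Hx)_i|²`,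
so summing over `i` gives `N ‖x‖² - 2a Re ⟪x, Hx⟫ + a² ‖Hx‖²`. In the eigenbasis,
`Re ⟪x, Hx⟫ = ∑ λ_j |⟪ψ_j, x⟫|²` because `H` is self-adjoint, and `‖x‖² = ∑ |⟪ψ_j, x⟫|²`
by Parseval.
-/

open scoped InnerProductSpace

/-- `A.mulVec` viewed as acting on `EuclideanSpace`. -/
noncomputable def mulVecE {N : ℕ} (A : Matrix (Fin N) (Fin N) ℂ)
    (v : EuclideanSpace ℂ (Fin N)) : EuclideanSpace ℂ (Fin N) :=
  WithLp.toLp 2 (A.mulVec v)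

open RCLike Finset

theorem EuclideanSpace.sum_norm_sub_single_sq {𝕜 ι : Type*} [RCLike 𝕜] [Fintype ι]
    [DecidableEq ι] (x w : EuclideanSpace 𝕜 ι) :
    ∑ i, ‖x - EuclideanSpace.single i (w i)‖ ^ 2
      = Fintype.card ι * ‖x‖ ^ 2 - 2 * re ⟪x, w⟫_𝕜 + ‖w‖ ^ 2 := by
  simp_rw [@norm_sub_sq 𝕜, EuclideanSpace.inner_single_right, PiLp.norm_single]
  rw [sum_add_distrib, sum_sub_distrib, sum_const, card_univ, nsmul_eq_mul, ← mul_sum,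
    ← map_sum, EuclideanSpace.norm_sq_eq w, PiLp.inner_apply]
  simp only [inner_apply]

theorem OrthonormalBasis.re_inner_map_self_eq_sum {𝕜 E ι : Type*} [RCLike 𝕜]
    [NormedAddCommGroup E] [InnerProductSpace 𝕜 E] [Fintype ι] (b : OrthonormalBasis ι 𝕜 E)
    {T : E →ₗ[𝕜] E} (hT : T.IsSymmetric) {lam : ι → ℝ}
    (hb : ∀ j, T (b j) = (lam j : 𝕜) • b j) (x : E) :
    re ⟪x, T x⟫_𝕜 = ∑ j, lam j * ‖⟪b j, x⟫_𝕜‖ ^ 2 := by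
  have hcoord : ∀ j, ⟪b j, T x⟫_𝕜 = lam j * ⟪b j, x⟫_𝕜 := fun j => by
    rw [← hT, hb, inner_smul_left, conj_ofReal]
  rw [← b.sum_inner_mul_inner, map_sum]
  refine sum_congr rfl fun j _ => ?_
  rw [hcoord, ← inner_conj_symm, mul_left_comm, RCLike.conj_mul, ← ofReal_pow, re_ofReal_mul,
    ofReal_re]

/-- For a Hermitian `H` with orthonormal eigenbasis `ψ_1,…,ψ_N`
(`H ψ_j = λ_j ψ_j`), the expectation over a uniformly sampled coordinate `i` of
`‖x − a (Hx)_i e_i‖²` equals `Σ_j (1 − 2aλ_j/N)·|⟨ψ_j, x⟩|² + (a²/N)·‖Hx‖²`. -/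
theorem stmt_8 (N : ℕ) (hN : 1 ≤ N)
    (H : Matrix (Fin N) (Fin N) ℂ) (hH : H.IsHermitian)
    (ψ : Fin N → EuclideanSpace ℂ (Fin N)) (lam : Fin N → ℝ)
    (hON : Orthonormal ℂ ψ)
    (hspan : Submodule.span ℂ (Set.range ψ) = ⊤)
    (heig : ∀ j : Fin N, mulVecE H (ψ j) = (lam j : ℂ) • ψ j)
    (x : EuclideanSpace ℂ (Fin N)) (a : ℝ) :
    (1 / (N : ℝ)) * ∑ i : Fin N,
        ‖x - (a : ℂ) • (mulVecE H x i • (EuclideanSpace.single i (1 : ℂ)))‖ ^ 2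
      = (∑ j : Fin N, (1 - 2 * a * lam j / (N : ℝ)) * ‖⟪ψ j, x⟫_ℂ‖ ^ 2)
        + (a ^ 2 / (N : ℝ)) * ‖mulVecE H x‖ ^ 2 := by
  set b := OrthonormalBasis.mk hON hspan.ge
  have hb : ⇑b = ψ := OrthonormalBasis.coe_mk hON hspan.ge
  have hquad : re ⟪x, mulVecE H x⟫_ℂ = ∑ j, lam j * ‖⟪ψ j, x⟫_ℂ‖ ^ 2 := by
    rw [← hb]
    exact b.re_inner_map_self_eq_sum (Matrix.isSymmetric_toEuclideanLin_iff.mpr hH)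
      (fun j => by rw [hb]; exact heig j) x
  have hrhs : ∑ j, (1 - 2 * a * lam j / N) * ‖⟪ψ j, x⟫_ℂ‖ ^ 2
      = ‖x‖ ^ 2 - 2 * a / N * ∑ j, lam j * ‖⟪ψ j, x⟫_ℂ‖ ^ 2 := by
    rw [← hb, ← b.sum_sq_norm_inner_right x, mul_sum, ← sum_sub_distrib]
    exact sum_congr rfl fun j _ => by ring
  have hstep : ∀ i, x - (a : ℂ) • (mulVecE H x i • EuclideanSpace.single i (1 : ℂ))
      = x - EuclideanSpace.single i (((a : ℂ) • mulVecE H x) i) := fun i => by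
    ext j
    by_cases hij : j = i <;> simp [hij]
  have hN0 : (N : ℝ) ≠ 0 := by positivity
  simp_rw [hstep]
  rw [EuclideanSpace.sum_norm_sub_single_sq, inner_smul_right, norm_smul, re_to_complex,
    Complex.re_ofReal_mul, ← re_to_complex, hquad, hrhs, Complex.norm_real, Real.norm_eq_abs,
    mul_pow, sq_abs, Fintype.card_fin]
  field_simp
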